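/- arXiv:math/0607720 — 4 statements merged into one kernel-verified Lean document; each statement's English description precedes it below -/
import Mathlib

section
/- For r > 0, the function H_r satisfies the quasi-periodicity H_r(z + 2ir) = H_r(z) - 2i for all z in its domain. -/
/-!
Replacing `z` by `z + 2ir` multiplies `e^{iz}` by `e^{-2r}`. The summand `(1/i)(t + w)/(t - w)` is
invariant under scaling `(t, w)` by `e^{2r}`, so this shifts the summation index by one. The shifted
symmetric partial sum differs from the original one by the boundary terms at `k = N + 1` and
`k = -N`, which tend to `1/i = -i` (as `e^{2kr} → ∞`) and to `-1/i = i` (as `e^{2kr} → 0`).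
-/

open Filter Finset Complex Topology Bornology

noncomputable def herglotzTerm (t w : ℂ) : ℂ := (1 / I) * (t + w) / (t - w)

theorem herglotzTerm_mul_mul {c : ℂ} (hc : c ≠ 0) (t w : ℂ) :
    herglotzTerm (c * t) (c * w) = herglotzTerm t w := by
  simp only [herglotzTerm, ← mul_add, ← mul_sub, mul_div_assoc, mul_div_mul_left _ _ hc]

theorem herglotzTerm_cexp_shift (r : ℝ) (z : ℂ) (k : ℤ) :
    herglotzTerm (cexp (2 * k * r)) (cexp (I * (z + 2 * I * r)))
      = herglotzTerm (cexp (2 * (k + 1 : ℤ) * r)) (cexp (I * z)) := by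
  rw [← herglotzTerm_mul_mul (exp_ne_zero (2 * r)), ← exp_add, ← exp_add]
  congr 2
  · push_cast
    ring
  · linear_combination (2 * r : ℂ) * I_sq

theorem tendsto_herglotzTerm_nhds_zero {w : ℂ} (hw : w ≠ 0) :
    Tendsto (herglotzTerm · w) (𝓝 0) (𝓝 I) := by
  have hcont : ContinuousAt (herglotzTerm · w) 0 :=
    ContinuousAt.div (by fun_prop) (by fun_prop) (by simpa using hw)
  have hval : herglotzTerm 0 w = I := by
    rw [herglotzTerm, zero_add, zero_sub, div_neg, mul_div_assoc, div_self hw]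
    simp
  exact hval ▸ hcont.tendsto

theorem tendsto_herglotzTerm_cobounded (w : ℂ) :
    Tendsto (herglotzTerm · w) (cobounded ℂ) (𝓝 (-I)) := by
  have hcont : ContinuousAt (herglotzTerm 1) 0 :=
    ContinuousAt.div (by fun_prop) (by fun_prop) (by simp)
  have hlim : Tendsto (fun t : ℂ => t⁻¹ * w) (cobounded ℂ) (𝓝 0) := by
    simpa using tendsto_inv₀_cobounded.mul_const w
  have hval : herglotzTerm 1 0 = -I := by simp [herglotzTerm]
  refine hval ▸ (hcont.tendsto.comp hlim).congr' ?_
  filter_upwards [(tendsto_norm_cobounded_atTop (E := ℂ)).eventually_gt_atTop 0] with t ht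
  rw [Function.comp_apply, ← herglotzTerm_mul_mul (inv_ne_zero (norm_pos_iff.mp ht)) t w,
    inv_mul_cancel₀ (norm_pos_iff.mp ht)]

theorem tendsto_cexp_two_mul_intCast_mul_atTop {r : ℝ} (hr : 0 < r) :
    Tendsto (fun k : ℤ => cexp (2 * k * r)) atTop (cobounded ℂ) := by
  refine tendsto_exp_comap_re_atTop.comp (tendsto_comap_iff.mpr ?_)
  simpa [Function.comp_def] using
    (tendsto_intCast_atTop_atTop.const_mul_atTop two_pos).atTop_mul_const hr

theorem tendsto_cexp_two_mul_intCast_mul_atBot {r : ℝ} (hr : 0 < r) :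
    Tendsto (fun k : ℤ => cexp (2 * k * r)) atBot (𝓝 0) := by
  refine tendsto_exp_nhds_zero_iff.mpr ?_
  simpa using
    ((tendsto_intCast_atBot_iff.mpr tendsto_id).const_mul_atBot two_pos).atBot_mul_const hr

/-- `H_r(z + 2ir) = H_r(z) - 2i`, where `H_r` is the symmetric limit
`lim_{N→∞} Σ_{k=-N}^N (1/i)(e^{2kr}+e^{iz})/(e^{2kr}-e^{iz})`. -/
theorem annulus_H_quasiperiodic (r : ℝ) (hr : 0 < r) (z : ℂ) (L : ℂ)
    (h : Filter.Tendsto (fun N : ℕ => ∑ k ∈ Finset.Icc (-(N : ℤ)) (N : ℤ),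
        (1 / Complex.I) * (Complex.exp (2 * k * r) + Complex.exp (Complex.I * z)) /
          (Complex.exp (2 * k * r) - Complex.exp (Complex.I * z)))
      Filter.atTop (nhds L)) :
    Filter.Tendsto (fun N : ℕ => ∑ k ∈ Finset.Icc (-(N : ℤ)) (N : ℤ),
        (1 / Complex.I) * (Complex.exp (2 * k * r) +
            Complex.exp (Complex.I * (z + 2 * Complex.I * r))) /
          (Complex.exp (2 * k * r) - Complex.exp (Complex.I * (z + 2 * Complex.I * r))))
      Filter.atTop (nhds (L - 2 * Complex.I)) := by
  let F : ℤ → ℂ := fun k => herglotzTerm (cexp (2 * k * r)) (cexp (I * z))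
  have htelescope (N : ℕ) : ∑ k ∈ Icc (-N : ℤ) N, (F k - F (k + 1)) = F (-N) - F (N + 1) := by
    rw [sum_Icc_eq_sum_Ico_add _ (by omega), sum_Ico_int_sub]
    abel
  have hlow : Tendsto (fun N : ℕ => F (-N)) atTop (𝓝 I) :=
    (tendsto_herglotzTerm_nhds_zero (exp_ne_zero _)).comp <|
      (tendsto_cexp_two_mul_intCast_mul_atBot hr).comp <|
        tendsto_neg_atTop_atBot.comp tendsto_natCast_atTop_atTop
  have hhigh : Tendsto (fun N : ℕ => F (N + 1)) atTop (𝓝 (-I)) :=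
    (tendsto_herglotzTerm_cobounded _).comp <|
      (tendsto_cexp_two_mul_intCast_mul_atTop hr).comp <|
        tendsto_atTop_add_const_right _ 1 tendsto_natCast_atTop_atTop
  have hlim := h.sub (hlow.sub hhigh)
  rw [show L - (I - -I) = L - 2 * I by ring] at hlim
  refine hlim.congr fun N => ?_
  rw [← htelescope, ← sum_sub_distrib]
  refine sum_congr rfl fun k _ => ?_
  change F k - (F k - F (k + 1)) = _
  rw [sub_sub_cancel]
  exact (herglotzTerm_cexp_shift r z k).symm
end

section
/- Let g be an entire function that is odd and satisfies g(z + 2π) = g(z) + 2π/r and g(z + 2ir) = g(z) + 2i for all z ∈ ℂ, where r > 0. Then g(z) = z/r for all z. -/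
open Set Complex

/-- an entire odd function with `g(z+2π) = g(z) + 2π/r` and
`g(z+2ir) = g(z) + 2i` (for a fixed `r > 0`) equals `z/r`. -/
theorem entire_odd_quasiperiodic_eq (r : ℝ) (hr : 0 < r) (g : ℂ → ℂ)
    (hg : Differentiable ℂ g)
    (hodd : ∀ z : ℂ, g (-z) = -g z)
    (h1 : ∀ z : ℂ, g (z + 2 * Real.pi) = g z + 2 * Real.pi / r)
    (h2 : ∀ z : ℂ, g (z + 2 * Complex.I * r) = g z + 2 * Complex.I) :
    ∀ z : ℂ, g z = z / r := by
  set h : ℂ → ℂ := fun z => g z - z / r with hh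
  have hrc : (r : ℂ) ≠ 0 := by exact_mod_cast hr.ne'
  have hdh : Differentiable ℂ h := hg.sub (differentiable_id.div_const _)
  have hp1 : Function.Periodic h (2 * Real.pi) := by
    intro z
    simp only [hh, h1 z]
    ring
  have hp2 : Function.Periodic h (2 * Complex.I * r) := by
    intro z
    simp only [hh, h2 z]
    field_simp
    ring
  -- boundedness
  have hbdd : ∃ C, ∀ z : ℂ, ‖h z‖ ≤ C := by
    have hK : IsCompact ((fun p : ℝ × ℝ => (p.1 : ℂ) + p.2 * Complex.I) ''
        (Icc 0 (2 * Real.pi) ×ˢ Icc 0 (2 * r))) :=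
      ((isCompact_Icc.prod isCompact_Icc).image (by continuity))
    obtain ⟨C, hC⟩ := hK.exists_bound_of_continuousOn (hdh.continuous.continuousOn)
    refine ⟨C, fun z => ?_⟩
    set m : ℤ := ⌊z.re / (2 * Real.pi)⌋
    set n : ℤ := ⌊z.im / (2 * r)⌋
    have hpi : (0:ℝ) < 2 * Real.pi := by positivity
    have hr2 : (0:ℝ) < 2 * r := by positivity
    set w : ℂ := z - m * (2 * Real.pi) - n * (2 * Complex.I * r) with hw
    have hzw : h z = h w := by
      have e1 : h w = h (z - m * (2 * Real.pi)) := by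
        have := (hp2.int_mul n).sub_eq (z - m * (2 * Real.pi))
        simpa [hw, sub_sub, mul_comm, mul_assoc, mul_left_comm] using this
      have e2 : h (z - m * (2 * Real.pi)) = h z := by
        have := (hp1.int_mul m).sub_eq z
        simpa [mul_comm, mul_assoc, mul_left_comm] using this
      rw [e1, e2]
    rw [hzw]
    apply hC
    refine ⟨(w.re, w.im), ?_, by simp [Complex.ext_iff]⟩
    have hwre : w.re = z.re - m * (2 * Real.pi) := by
      simp [hw]
    have hwim : w.im = z.im - n * (2 * r) := by
      simp only [hw, sub_im, intCast_im, intCast_re, ofReal_im, ofReal_re, mul_im, mul_re,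
        Complex.I_re, Complex.I_im, Complex.re_ofNat, Complex.im_ofNat]
      ring
    constructor
    · rw [hwre]
      constructor
      · have := Int.sub_floor_div_mul_nonneg z.re hpi
        simpa [m] using this
      · have := Int.sub_floor_div_mul_lt z.re hpi
        exact le_of_lt (by simpa [m] using this)
    · rw [hwim]
      constructor
      · have := Int.sub_floor_div_mul_nonneg z.im hr2
        simpa [n] using this
      · have := Int.sub_floor_div_mul_lt z.im hr2
        exact le_of_lt (by simpa [n] using this)
  obtain ⟨C, hC⟩ := hbdd
  have hconst : ∀ z : ℂ, h z = h 0 := by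
    intro z
    apply hdh.apply_eq_apply_of_bounded
    rw [Metric.isBounded_iff_subset_closedBall 0]
    refine ⟨C, ?_⟩
    rintro x ⟨z, rfl⟩
    simpa using hC z
  have hg0 : g 0 = 0 := by
    have := hodd 0
    simp at this
    linear_combination this / 2
  intro z
  have := hconst z
  simp [hh, hg0] at this
  linear_combination this
end

section
/- For s > 0 and real x with s/2 ≤ x ≤ 3s/2, one has Σ_{k=-∞}^{∞} e^{x} e^{2ks}/((e^{x} + e^{2ks})²) ≤ 2e^{−s/2}/(1 − e^{−2s}). -/
/-- for `s > 0` and `s/2 ≤ x ≤ 3s/2`,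
`Σ_{k∈ℤ} eˣ e^{2ks}/(eˣ+e^{2ks})² ≤ 2e^{−s/2}/(1−e^{−2s})`. -/
theorem exp_series_bound (s x : ℝ) (hs : 0 < s) (h1 : s / 2 ≤ x) (h2 : x ≤ 3 * s / 2) :
    (∑' k : ℤ, Real.exp x * Real.exp (2 * k * s) /
        (Real.exp x + Real.exp (2 * k * s)) ^ 2)
      ≤ 2 * Real.exp (-s / 2) / (1 - Real.exp (-2 * s)) := by
  set c := Real.exp (-s / 2) with hc
  set r := Real.exp (-2 * s) with hr
  have hc0 : 0 < c := Real.exp_pos _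
  have hr0 : 0 < r := Real.exp_pos _
  have hr1 : r < 1 := by rw [hr, Real.exp_lt_one_iff]; linarith
  have hr1' : (0:ℝ) < 1 - r := by linarith
  set f : ℤ → ℝ := fun k => Real.exp x * Real.exp (2 * k * s) /
        (Real.exp x + Real.exp (2 * k * s)) ^ 2 with hf
  set g : ℤ → ℝ := fun k =>
    if 1 ≤ k then c * r ^ (k - 1).toNat else c * r ^ (-k).toNat with hg
  have hrn : ∀ n : ℕ, r ^ n = Real.exp ((n : ℝ) * (-2 * s)) := fun n => by
    rw [Real.exp_nat_mul]
  have hfg : ∀ k : ℤ, f k ≤ g k := by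
    intro k
    have ha : (0:ℝ) < Real.exp x := Real.exp_pos _
    have hb : (0:ℝ) < Real.exp (2 * k * s) := Real.exp_pos _
    by_cases hk : 1 ≤ k
    · have key : f k ≤ Real.exp (x - 2 * k * s) := by
        rw [Real.exp_sub, hf]
        calc Real.exp x * Real.exp (2*k*s) / (Real.exp x + Real.exp (2*k*s))^2
            ≤ Real.exp x * Real.exp (2*k*s) / Real.exp (2*k*s)^2 := by
              apply div_le_div_of_nonneg_left (by positivity) (by positivity)
              nlinarith
          _ = Real.exp x / Real.exp (2*k*s) := by
              field_simp
      have hgk : g k = c * r ^ (k - 1).toNat := if_pos hk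
      have hcast : (((k - 1).toNat : ℕ) : ℝ) = (k : ℝ) - 1 := by
        have : (((k - 1).toNat : ℤ) : ℝ) = ((k - 1 : ℤ) : ℝ) := by
          rw [Int.toNat_of_nonneg (by omega)]
        push_cast at this ⊢
        linarith
      rw [hgk, hrn, hcast, hc, ← Real.exp_add]
      refine key.trans (Real.exp_le_exp.mpr ?_)
      nlinarith [h2]
    · have key : f k ≤ Real.exp (2 * k * s - x) := by
        rw [Real.exp_sub, hf]
        calc Real.exp x * Real.exp (2*k*s) / (Real.exp x + Real.exp (2*k*s))^2
            ≤ Real.exp x * Real.exp (2*k*s) / Real.exp x ^2 := by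
              apply div_le_div_of_nonneg_left (by positivity) (by positivity)
              nlinarith
          _ = Real.exp (2*k*s) / Real.exp x := by
              field_simp
      have hgk : g k = c * r ^ (-k).toNat := if_neg hk
      have hcast : (((-k).toNat : ℕ) : ℝ) = -(k : ℝ) := by
        have : (((-k).toNat : ℤ) : ℝ) = ((-k : ℤ) : ℝ) := by
          rw [Int.toNat_of_nonneg (by omega)]
        push_cast at this ⊢
        linarith
      rw [hgk, hrn, hcast, hc, ← Real.exp_add]
      refine key.trans (Real.exp_le_exp.mpr ?_)
      nlinarith [h1]
  -- sum of g
  have hgeo : HasSum (fun n : ℕ => r ^ n) (1 - r)⁻¹ :=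
    hasSum_geometric_of_lt_one hr0.le hr1
  have hpos1 : HasSum (fun n : ℕ => g (↑(n + 1))) (c * (1 - r)⁻¹) := by
    have := hgeo.mul_left c
    refine this.congr_fun fun n => ?_
    have h1n : (1:ℤ) ≤ (↑(n+1) : ℤ) := by exact_mod_cast Nat.succ_le_succ (Nat.zero_le n)
    have htn : ((↑(n+1) : ℤ) - 1).toNat = n := by omega
    rw [hg]
    simp only [if_pos h1n, htn]
  have hpos : HasSum (fun n : ℕ => g ↑n) (c * (1 - r)⁻¹ + c) := by
    have h : HasSum (fun n : ℕ => g ↑n)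
        (c * (1 - r)⁻¹ + ∑ i ∈ Finset.range 1, g ↑i) :=
      (hasSum_nat_add_iff (f := fun n : ℕ => g ↑n) 1).mp hpos1
    convert h using 2
    simp [hg]
  have hneg : HasSum (fun n : ℕ => g (-(↑n + 1))) (c * r * (1 - r)⁻¹) := by
    have := (hgeo.mul_left (c * r))
    refine this.congr_fun fun n => ?_
    have hnk : ¬ (1:ℤ) ≤ -((n:ℤ) + 1) := by omega
    have htn : (-(-((n:ℤ) + 1))).toNat = n + 1 := by omega
    rw [hg]
    simp only [if_neg hnk, htn]
    rw [pow_succ]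
    ring
  have hsum : HasSum g (c * (1 - r)⁻¹ + c + c * r * (1 - r)⁻¹) :=
    HasSum.of_nat_of_neg_add_one hpos hneg
  have hfs : Summable f :=
    Summable.of_nonneg_of_le (fun k => by positivity) hfg hsum.summable
  have := Summable.tsum_le_tsum hfg hfs hsum.summable
  rw [hsum.tsum_eq] at this
  refine this.trans (le_of_eq ?_)
  field_simp
  ring
end

section
/- Let f be analytic near a real point ξ with f'(ξ) ≠ 0, and let a, b ∈ ℝ. Define G(w) := f'(ξ)²·f'(w)·(−2/(f(w)−f(ξ))² + a) − f''(w)·(2/(w−ξ)) − f'(w)·(−2/(w−ξ)² + b). Then lim_{w→ξ} G(w) = f'(ξ)·[ (1/2)(f''(ξ)/f'(ξ))² − (4/3)(f'''(ξ)/f'(ξ)) + f'(ξ)²·a − b ]. -/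
/-!
Write `f w = f z + (w - z) f'(z) + (w - z)² R w` with `R = dslope (dslope f z) z` analytic at `z`.
Then `f'` and `f''` are quadratic in `w - z` with coefficients built from `R, R', R''`, and
`f''(z) = 2 R(z)`, `f'''(z) = 6 R'(z)`. Substituting, the singular terms of the drift collapse,
for `w ≠ z`, to `(w - z) R'' + 3 R' + c (c R' - R²) / (c + (w - z) R)²` with `c = f'(z)`, which is
continuous at `z`; the `a`, `b` terms just contribute `f'(w) (c² a - b) → c (c² a - b)`.
-/

open Filter Topology

section

variable {𝕜 : Type*} [NontriviallyNormedField 𝕜]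

theorem AnalyticAt.dslope {E : Type*} [NormedAddCommGroup E] [NormedSpace 𝕜 E]
    {f : 𝕜 → E} {z : 𝕜} (hf : AnalyticAt 𝕜 f z) : AnalyticAt 𝕜 (dslope f z) z := by
  obtain ⟨p, hp⟩ := hf
  exact ⟨p.fslope, hp.has_fpower_series_dslope_fslope⟩

theorem HasDerivAt.add_sub_mul_add_sub_sq_mul {A B C : 𝕜 → 𝕜} {A' B' C' w : 𝕜} (z : 𝕜)
    (hA : HasDerivAt A A' w) (hB : HasDerivAt B B' w) (hC : HasDerivAt C C' w) :
    HasDerivAt (fun t => A t + (t - z) * B t + (t - z) ^ 2 * C t)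
      (A' + B w + (w - z) * B' + (2 * (w - z) * C w + (w - z) ^ 2 * C')) w := by
  have hu : HasDerivAt (fun t => t - z) 1 w := (hasDerivAt_id w).sub_const z
  exact ((hA.fun_add (hu.fun_mul hB)).fun_add ((hu.fun_pow 2).fun_mul hC)).congr_deriv
    (by norm_num; ring)

noncomputable def dslope₂ (f : 𝕜 → 𝕜) (z : 𝕜) : 𝕜 → 𝕜 := dslope (dslope f z) z

theorem add_sub_mul_deriv_add_sq_mul_dslope₂ (f : 𝕜 → 𝕜) (z w : 𝕜) :
    f z + (w - z) * deriv f z + (w - z) ^ 2 * dslope₂ f z w = f w := by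
  have h₁ := sub_smul_dslope f z w
  have h₂ := sub_smul_dslope (dslope f z) z w
  rw [dslope_same] at h₂
  simp only [smul_eq_mul] at h₁ h₂
  rw [dslope₂]
  linear_combination h₁ + (w - z) * h₂

theorem analyticAt_dslope₂ {f : 𝕜 → 𝕜} {z : 𝕜} (hf : AnalyticAt 𝕜 f z) :
    AnalyticAt 𝕜 (dslope₂ f z) z :=
  hf.dslope.dslope

theorem pole_cancellation_eq {K : Type*} [Field K] {c u r r₁ r₂ : K} (hu : u ≠ 0) (hq : c + u * r ≠ 0) :
    c ^ 2 * (c + u * (2 * r) + u ^ 2 * r₁) / (u * (c + u * r)) ^ 2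
        + (2 * r + u * (4 * r₁) + u ^ 2 * r₂) / u - (c + u * (2 * r) + u ^ 2 * r₁) / u ^ 2
      = u * r₂ + 3 * r₁ + c * (c * r₁ - r ^ 2) / (c + u * r) ^ 2 := by
  field_simp
  ring

namespace AnalyticAt

variable [CompleteSpace 𝕜] {f : 𝕜 → 𝕜} {z : 𝕜}

theorem eventually_deriv_eq (hf : AnalyticAt 𝕜 f z) :
    ∀ᶠ w in 𝓝 z, deriv f w = deriv f z + (w - z) * (2 * dslope₂ f z w)
      + (w - z) ^ 2 * deriv (dslope₂ f z) w := by
  filter_upwards [(analyticAt_dslope₂ hf).eventually_analyticAt] with w hR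
  have h := (hasDerivAt_const w (f z)).add_sub_mul_add_sub_sq_mul z (hasDerivAt_const w (deriv f z))
    hR.differentiableAt.hasDerivAt
  rw [funext (add_sub_mul_deriv_add_sq_mul_dslope₂ f z)] at h
  exact h.deriv.trans (by ring)

theorem eventually_deriv_deriv_eq (hf : AnalyticAt 𝕜 f z) :
    ∀ᶠ w in 𝓝 z, deriv (deriv f) w = 2 * dslope₂ f z w
      + (w - z) * (4 * deriv (dslope₂ f z) w) + (w - z) ^ 2 * deriv (deriv (dslope₂ f z)) w := by
  filter_upwards [hf.eventually_deriv_eq.eventually_nhds, (analyticAt_dslope₂ hf).eventually_analyticAt]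
    with w hf' hR
  rw [EventuallyEq.deriv_eq hf']
  exact ((hasDerivAt_const w _).add_sub_mul_add_sub_sq_mul z
    (hR.differentiableAt.hasDerivAt.const_mul 2) hR.deriv.differentiableAt.hasDerivAt).deriv.trans
    (by ring)

theorem deriv_deriv_eq (hf : AnalyticAt 𝕜 f z) : deriv (deriv f) z = 2 * dslope₂ f z z := by
  simpa using hf.eventually_deriv_deriv_eq.self_of_nhds

theorem deriv_deriv_deriv_eq (hf : AnalyticAt 𝕜 f z) :
    deriv (deriv (deriv f)) z = 6 * deriv (dslope₂ f z) z := by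
  have hR := (analyticAt_dslope₂ hf)
  rw [EventuallyEq.deriv_eq hf.eventually_deriv_deriv_eq]
  exact ((hR.differentiableAt.hasDerivAt.const_mul 2).add_sub_mul_add_sub_sq_mul z
    (hR.deriv.differentiableAt.hasDerivAt.const_mul 4)
    hR.deriv.deriv.differentiableAt.hasDerivAt).deriv.trans (by ring)

/- The combination is the derivative of `f' w / (w - z) - f'(z)² / (f w - f z)`, whose poles at `z`
cancel; this is why it has a finite limit. -/
theorem tendsto_pole_cancellation [CharZero 𝕜] (hf : AnalyticAt 𝕜 f z) (hc : deriv f z ≠ 0) :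
    Tendsto (fun w => deriv f z ^ 2 * deriv f w / (f w - f z) ^ 2
        + deriv (deriv f) w / (w - z) - deriv f w / (w - z) ^ 2) (𝓝[≠] z)
      (𝓝 (2 / 3 * deriv (deriv (deriv f)) z - deriv (deriv f) z ^ 2 / (4 * deriv f z))) := by
  set c := deriv f z
  set R := dslope₂ f z
  have hR := (analyticAt_dslope₂ hf)
  have hR₀ := hR.continuousAt
  have hR₁ := hR.deriv.continuousAt
  have hR₂ := hR.deriv.deriv.continuousAt
  have hQ : ContinuousAt (fun w => c + (w - z) * R w) z := by fun_prop
  have hQz : c + (z - z) * R z ≠ 0 := by simpa using hc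
  set F := fun w => (w - z) * deriv (deriv R) w + 3 * deriv R w
    + c * (c * deriv R w - R w ^ 2) / (c + (w - z) * R w) ^ 2
  have hF : ContinuousAt F z :=
    (by fun_prop : ContinuousAt (fun w => (w - z) * deriv (deriv R) w + 3 * deriv R w) z).add
      ((by fun_prop : ContinuousAt (fun w => c * (c * deriv R w - R w ^ 2)) z).div (hQ.pow 2)
        (pow_ne_zero 2 hQz))
  have hFz : F z = 2 / 3 * deriv (deriv (deriv f)) z - deriv (deriv f) z ^ 2 / (4 * c) := by
    rw [hf.deriv_deriv_eq, hf.deriv_deriv_deriv_eq]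
    simp only [F, sub_self, zero_mul, add_zero, zero_add]
    field_simp
    ring
  rw [← hFz]
  refine (hF.tendsto.mono_left nhdsWithin_le_nhds).congr' ?_
  filter_upwards [nhdsWithin_le_nhds hf.eventually_deriv_eq,
    nhdsWithin_le_nhds hf.eventually_deriv_deriv_eq,
    nhdsWithin_le_nhds (hQ.eventually_ne hQz), self_mem_nhdsWithin] with w h₁ h₂ hq hw
  have hfw : f w - f z = (w - z) * (c + (w - z) * R w) := by
    linear_combination -(add_sub_mul_deriv_add_sq_mul_dslope₂ f z w)
  rw [h₁, h₂, hfw, pole_cancellation_eq (sub_ne_zero.2 hw) hq]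

end AnalyticAt

end

/-- for `f` analytic near a real point `ξ` with `f'(ξ) ≠ 0` and
`a, b ∈ ℝ`, the function
`G(w) = f'(ξ)² f'(w)(−2/(f(w)−f(ξ))² + a) − f''(w)·2/(w−ξ) − f'(w)(−2/(w−ξ)² + b)`
tends to `f'(ξ)·[(1/2)(f''(ξ)/f'(ξ))² − (4/3)(f'''(ξ)/f'(ξ)) + f'(ξ)²·a − b]`
as `w → ξ`. -/
theorem key_limit_drift (f : ℂ → ℂ) (ξ : ℝ) (a b : ℝ)
    (hf : AnalyticAt ℂ f (ξ : ℂ)) (hf' : deriv f (ξ : ℂ) ≠ 0) :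
    Filter.Tendsto (fun w : ℂ =>
        (deriv f (ξ : ℂ)) ^ 2 * deriv f w *
            (-2 / (f w - f (ξ : ℂ)) ^ 2 + (a : ℂ)) -
          deriv (deriv f) w * (2 / (w - (ξ : ℂ))) -
          deriv f w * (-2 / (w - (ξ : ℂ)) ^ 2 + (b : ℂ)))
      (nhdsWithin (ξ : ℂ) {((ξ : ℂ))}ᶜ)
      (nhds (deriv f (ξ : ℂ) *
        ((1 / 2) * (deriv (deriv f) (ξ : ℂ) / deriv f (ξ : ℂ)) ^ 2 -
          (4 / 3) * (deriv (deriv (deriv f)) (ξ : ℂ) / deriv f (ξ : ℂ)) +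
          (deriv f (ξ : ℂ)) ^ 2 * (a : ℂ) - (b : ℂ)))) := by
  have hS := hf.tendsto_pole_cancellation hf'
  have hd : Tendsto (deriv f) (𝓝[≠] (ξ : ℂ)) (𝓝 (deriv f ξ)) :=
    hf.deriv.continuousAt.tendsto.mono_left nhdsWithin_le_nhds
  convert (hS.const_mul (-2)).add (hd.const_mul (deriv f ξ ^ 2 * a - b)) using 2
  · ring
  · field_simp
    ring
end
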